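/- arXiv:2603.11919 — 3 statements merged into one kernel-verified Lean document; each statement's English description precedes it below -/
import Mathlib

section
/- Let Q ∈ ℝ^{n_c × n_z} have full row rank. If Q^T w₁ = -∇φ(z₁) and Q^T w₂ = -∇φ(z₂) where φ is L_φ-smooth, then ‖w₁ - w₂‖² ≤ (L_φ²/λ_min⁺(Q^T Q))·‖z₁ - z₂‖², where λ_min⁺ denotes the smallest positive eigenvalue. -/
/-!
Since `Q` has full row rank, `Q Qᵀ` is positive definite, and each of its eigenvalues,
being nonzero, is also an eigenvalue of `Qᵀ Q` (if `Q Qᵀ v = μ v` then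
`Qᵀ Q (Qᵀ v) = μ Qᵀ v` with `Qᵀ v ≠ 0`). Hence `λ_min⁺(QᵀQ) ≤ λ_min(QQᵀ)`, and the
Rayleigh bound for `Q Qᵀ` gives
`λ_min⁺ ‖w₁ - w₂‖² ≤ ‖Qᵀ (w₁ - w₂)‖² = ‖∇φ(z₁) - ∇φ(z₂)‖² ≤ L_φ² ‖z₁ - z₂‖²`.
-/

open Matrix

noncomputable def toE {n : ℕ} (v : Fin n → ℝ) : EuclideanSpace ℝ (Fin n) :=
  (WithLp.equiv 2 (Fin n → ℝ)).symm v

noncomputable def ofE {n : ℕ} (v : EuclideanSpace ℝ (Fin n)) : Fin n → ℝ :=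
  WithLp.equiv 2 (Fin n → ℝ) v

open scoped ComplexOrder

namespace Matrix

variable {m n 𝕜 : Type*} [Fintype m] [Fintype n] [DecidableEq m] [DecidableEq n] [RCLike 𝕜]

theorem IsHermitian.exists_eigenvalues_eq_of_mulVec_eq_smul {A : Matrix n n 𝕜}
    (hA : A.IsHermitian) {μ : ℝ} {v : n → 𝕜} (hv : v ≠ 0) (hAv : A *ᵥ v = (μ : 𝕜) • v) :
    ∃ i, hA.eigenvalues i = μ := by
  rw [← Set.mem_range, ← hA.spectrum_real_eq_range_eigenvalues, spectrum.mem_iff]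
  intro hunit
  refine hv (mulVec_injective_iff_isUnit.mpr hunit ?_)
  rw [mulVec_zero, sub_mulVec, hAv, Algebra.algebraMap_eq_smul_one, smul_mulVec, one_mulVec,
    RCLike.real_smul_eq_coe_smul (K := 𝕜) (E := n → 𝕜), sub_self]

theorem IsHermitian.exists_eigenvalues_eq_of_mul_comm {A : Matrix m n 𝕜} {B : Matrix n m 𝕜}
    (hAB : (A * B).IsHermitian) (hBA : (B * A).IsHermitian) {i : m}
    (hi : hAB.eigenvalues i ≠ 0) : ∃ j, hBA.eigenvalues j = hAB.eigenvalues i := by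
  set v : m → 𝕜 := ⇑(hAB.eigenvectorBasis i)
  have hv : (A * B) *ᵥ v = (hAB.eigenvalues i : 𝕜) • v := by
    rw [hAB.mulVec_eigenvectorBasis i, RCLike.real_smul_eq_coe_smul (K := 𝕜) (E := m → 𝕜)]
  have hv0 : v ≠ 0 :=
    (WithLp.ofLp_eq_zero 2).ne.2 <| hAB.eigenvectorBasis.orthonormal.ne_zero i
  refine hBA.exists_eigenvalues_eq_of_mulVec_eq_smul (v := B *ᵥ v) (fun hBv => hv0 ?_) ?_
  · have hABv : (A * B) *ᵥ v = 0 := by rw [← mulVec_mulVec, hBv, mulVec_zero]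
    rw [hv] at hABv
    exact (smul_eq_zero.mp hABv).resolve_left (by exact_mod_cast hi)
  · rw [mulVec_mulVec, Matrix.mul_assoc, ← mulVec_mulVec, hv, mulVec_smul]

theorem PosSemidef.posDef_of_rank_eq {A : Matrix n n 𝕜} (hA : A.PosSemidef)
    (hrank : A.rank = Fintype.card n) : A.PosDef := by
  refine hA.isHermitian.posDef_iff_eigenvalues_pos.mpr fun i =>
    (hA.eigenvalues_nonneg i).lt_of_ne' fun hi => ?_
  have hlt := Fintype.card_subtype_lt (p := fun j => hA.isHermitian.eigenvalues j ≠ 0)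
    (not_not.mpr hi)
  rw [← hA.isHermitian.rank_eq_card_non_zero_eigs, hrank] at hlt
  exact lt_irrefl _ hlt

open scoped MatrixOrder in
theorem IsHermitian.mul_dotProduct_self_le {A : Matrix n n ℝ} (hA : A.IsHermitian) {c : ℝ}
    (hc : ∀ i, c ≤ hA.eigenvalues i) (v : n → ℝ) : c * (v ⬝ᵥ v) ≤ v ⬝ᵥ (A *ᵥ v) := by
  have hcA : algebraMap ℝ (Matrix n n ℝ) c ≤ A := by
    rw [algebraMap_le_iff_le_spectrum (a := A) hA.isSelfAdjoint,
      hA.spectrum_real_eq_range_eigenvalues]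
    rintro _ ⟨i, rfl⟩
    exact hc i
  simpa [sub_mulVec, dotProduct_sub, Algebra.algebraMap_eq_smul_one, smul_mulVec, sub_nonneg]
    using (le_iff.mp hcA).dotProduct_mulVec_nonneg v

theorem eigenvalues_self_mul_transpose_mem {Q : Matrix m n ℝ} (hrank : Q.rank = Fintype.card m)
    (hH : (Qᵀ * Q).IsHermitian) (hQQ : (Q * Qᵀ).IsHermitian) (j : m) :
    hQQ.eigenvalues j ∈ {t : ℝ | 0 < t ∧ ∃ i, hH.eigenvalues i = t} := by
  have hpd : (Q * Qᵀ).PosDef := by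
    refine PosSemidef.posDef_of_rank_eq ?_ (by rw [rank_self_mul_transpose, hrank])
    simpa using posSemidef_self_mul_conjTranspose Q
  exact ⟨hpd.eigenvalues_pos j,
    hQQ.exists_eigenvalues_eq_of_mul_comm hH (hpd.eigenvalues_pos j).ne'⟩

end Matrix

theorem ofE_dotProduct_self {n : ℕ} (x : EuclideanSpace ℝ (Fin n)) :
    ofE x ⬝ᵥ ofE x = ‖x‖ ^ 2 := by
  rw [← real_inner_self_eq_norm_sq, EuclideanSpace.inner_eq_star_dotProduct]
  simp only [ofE, WithLp.equiv_apply, star_trivial]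

theorem LipschitzWith.sq_norm_sub_le {E F : Type*} [SeminormedAddCommGroup E]
    [SeminormedAddCommGroup F] {f : E → F} {L : ℝ} (hf : LipschitzWith (Real.toNNReal L) f)
    (x y : E) : ‖f x - f y‖ ^ 2 ≤ L ^ 2 * ‖x - y‖ ^ 2 := by
  have h := hf.norm_sub_le x y
  rw [Real.coe_toNNReal'] at h
  calc ‖f x - f y‖ ^ 2 ≤ (max L 0 * ‖x - y‖) ^ 2 := by gcongr
    _ = max L 0 ^ 2 * ‖x - y‖ ^ 2 := mul_pow _ _ _
    _ ≤ L ^ 2 * ‖x - y‖ ^ 2 := by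
      gcongr ?_ * _
      rw [sq_le_sq, abs_of_nonneg (le_max_right L 0)]
      exact max_le (le_abs_self L) (abs_nonneg L)

theorem stmt_2_general (nc nz : ℕ) (Q : Matrix (Fin nc) (Fin nz) ℝ)
    (hrank : Q.rank = nc)
    (φ : EuclideanSpace ℝ (Fin nz) → ℝ)
    (Lφ : ℝ)
    (hlip : LipschitzWith (Real.toNNReal Lφ) (fun z => gradient φ z))
    (w₁ w₂ : EuclideanSpace ℝ (Fin nc)) (z₁ z₂ : EuclideanSpace ℝ (Fin nz))
    (h₁ : Qᵀ.mulVec (ofE w₁) = ofE (-gradient φ z₁))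
    (h₂ : Qᵀ.mulVec (ofE w₂) = ofE (-gradient φ z₂))
    (hH : (Qᵀ * Q).IsHermitian)
    (lamPlus : ℝ)
    (hlam : lamPlus = sInf {t : ℝ | 0 < t ∧ ∃ i, hH.eigenvalues i = t}) :
    ‖w₁ - w₂‖ ^ 2 ≤ Lφ ^ 2 / lamPlus * ‖z₁ - z₂‖ ^ 2 := by
  set S := {t : ℝ | 0 < t ∧ ∃ i, hH.eigenvalues i = t}
  have hQQ : (Q * Qᵀ).IsHermitian := by simpa using isHermitian_mul_conjTranspose_self Q
  have hS : ∀ j, hQQ.eigenvalues j ∈ S :=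
    eigenvalues_self_mul_transpose_mem (by rw [hrank, Fintype.card_fin]) hH hQQ
  have hlam_le : ∀ j, lamPlus ≤ hQQ.eigenvalues j := fun j =>
    hlam ▸ csInf_le ⟨0, fun _ ht => ht.1.le⟩ (hS j)
  have hQw : Qᵀ *ᵥ ofE (w₁ - w₂) = ofE (gradient φ z₂ - gradient φ z₁) := by
    simp only [ofE, WithLp.equiv_apply, WithLp.ofLp_sub] at h₁ h₂ ⊢
    rw [mulVec_sub, h₁, h₂, WithLp.ofLp_neg, WithLp.ofLp_neg, neg_sub_neg]
  have key : lamPlus * ‖w₁ - w₂‖ ^ 2 ≤ Lφ ^ 2 * ‖z₁ - z₂‖ ^ 2 := calc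
    lamPlus * ‖w₁ - w₂‖ ^ 2 = lamPlus * (ofE (w₁ - w₂) ⬝ᵥ ofE (w₁ - w₂)) := by
      rw [ofE_dotProduct_self]
    _ ≤ ofE (w₁ - w₂) ⬝ᵥ ((Q * Qᵀ) *ᵥ ofE (w₁ - w₂)) :=
      hQQ.mul_dotProduct_self_le hlam_le _
    _ = ‖gradient φ z₂ - gradient φ z₁‖ ^ 2 := by
      rw [← mulVec_mulVec, dotProduct_mulVec, ← mulVec_transpose, hQw, ofE_dotProduct_self]
    _ ≤ Lφ ^ 2 * ‖z₂ - z₁‖ ^ 2 := hlip.sq_norm_sub_le z₂ z₁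
    _ = Lφ ^ 2 * ‖z₁ - z₂‖ ^ 2 := by rw [norm_sub_rev]
  rcases isEmpty_or_nonempty (Fin nc) with hnc | ⟨⟨j⟩⟩
  · rw [Subsingleton.elim w₁ w₂, sub_self, norm_zero, zero_pow two_ne_zero]
    have : 0 ≤ lamPlus := hlam ▸ Real.sInf_nonneg fun _ ht => ht.1.le
    positivity
  · have hfin : S.Finite := (Set.finite_range hH.eigenvalues).subset fun _ ht => ht.2
    have hlam_pos : 0 < lamPlus := hlam ▸ (Set.Nonempty.csInf_mem ⟨_, hS j⟩ hfin).1
    rw [div_mul_eq_mul_div, le_div_iff₀ hlam_pos]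
    linarith

/-- If `Q` has full row rank, `φ` is `L_φ`-smooth, and
`Qᵀ wᵢ = -∇φ(zᵢ)` for `i = 1, 2`, then
`‖w₁ - w₂‖² ≤ (L_φ² / λ_min⁺(QᵀQ)) ‖z₁ - z₂‖²`, where `λ_min⁺(QᵀQ)` is the
smallest positive eigenvalue of `QᵀQ`. -/
theorem stmt_2 (nc nz : ℕ) (Q : Matrix (Fin nc) (Fin nz) ℝ)
    (hrank : Q.rank = nc)
    (φ : EuclideanSpace ℝ (Fin nz) → ℝ) (hdiff : Differentiable ℝ φ)
    (Lφ : ℝ) (hLφ : 0 ≤ Lφ)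
    (hlip : LipschitzWith (Real.toNNReal Lφ) (fun z => gradient φ z))
    (w₁ w₂ : EuclideanSpace ℝ (Fin nc)) (z₁ z₂ : EuclideanSpace ℝ (Fin nz))
    (h₁ : Qᵀ.mulVec (ofE w₁) = ofE (-gradient φ z₁))
    (h₂ : Qᵀ.mulVec (ofE w₂) = ofE (-gradient φ z₂))
    (hH : (Qᵀ * Q).IsHermitian)
    (lamPlus : ℝ)
    (hlam : lamPlus = sInf {t : ℝ | 0 < t ∧ ∃ i, hH.eigenvalues i = t}) :
    ‖w₁ - w₂‖ ^ 2 ≤ Lφ ^ 2 / lamPlus * ‖z₁ - z₂‖ ^ 2 :=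
  stmt_2_general nc nz Q hrank φ Lφ hlip w₁ w₂ z₁ z₂ h₁ h₂ hH lamPlus hlam
end

section
/- Let h : ℝ^n → ℝ be μ-strongly convex and L-smooth, A a linear map, C a closed convex set, and b₁, b₂ ∈ Im(A). Define U₁ = {x : Ax + b₁ ∈ C} and U₂ = {x : Ax + b₂ ∈ C}, both nonempty, and let x* = argmin{h(x) : x ∈ U₁}, y* = argmin{h(y) : y ∈ U₂}. Then ‖x* - y*‖ ≤ ((1 + 2L/μ)/√(λ_min⁺(AA^T)))·‖b₂ - b₁‖. -/
/-!
Let `d` be the least-norm solution of `A d = b₁ - b₂`; in an eigenbasis of `AAᵀ` one sees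
`‖d‖ ≤ ‖b₁ - b₂‖ / √λ_min⁺(AAᵀ)`. Translation by `d` maps `U₁` into `U₂` and back, so the
first-order optimality conditions of `x*` on `U₁` and of `y*` on `U₂`, tested at `y* - d` and
`x* + d`, combine with strong monotonicity and Lipschitz continuity of `∇h` into
`μ ‖x* - (y* - d)‖² ≤ L ‖d‖ ‖x* - (y* - d)‖`. Hence `‖x* - y*‖ ≤ (1 + L/μ) ‖d‖`.
-/

open Matrix

open Set
open scoped RealInnerProductSpace NNReal

namespace Matrix

theorem range_mulVecLin_mul_transpose_self {m n R : Type*} [Fintype m] [Fintype n]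
    [Field R] [LinearOrder R] [IsStrictOrderedRing R] (A : Matrix m n R) :
    LinearMap.range (A * Aᵀ).mulVecLin = LinearMap.range A.mulVecLin := by
  refine Submodule.eq_of_le_of_finrank_eq ?_ (rank_self_mul_transpose A)
  rw [mulVecLin_mul]
  exact LinearMap.range_comp_le_range _ _

variable {𝕜 n : Type*} [RCLike 𝕜] [Fintype n] [DecidableEq n] {A : Matrix n n 𝕜}

/-- `λ_min⁺`. As `sInf ∅ = 0`, it is `0` when no eigenvalue is positive, which for `A` positive
semidefinite means `A = 0`. -/
noncomputable def IsHermitian.minPosEigenvalue (hA : A.IsHermitian) : ℝ :=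
  sInf {t : ℝ | 0 < t ∧ ∃ i, hA.eigenvalues i = t}

namespace IsHermitian

theorem minPosEigenvalue_le (hA : A.IsHermitian) {i : n} (hi : 0 < hA.eigenvalues i) :
    hA.minPosEigenvalue ≤ hA.eigenvalues i :=
  csInf_le ⟨0, fun _ ht => ht.1.le⟩ ⟨hi, i, rfl⟩

theorem minPosEigenvalue_pos (hA : A.IsHermitian) {i : n} (hi : 0 < hA.eigenvalues i) :
    0 < hA.minPosEigenvalue := by
  have hmem : hA.eigenvalues i ∈ {t : ℝ | 0 < t ∧ ∃ j, hA.eigenvalues j = t} := ⟨hi, i, rfl⟩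
  exact (Set.Nonempty.csInf_mem ⟨_, hmem⟩ ((Set.finite_range _).subset fun _ ht => ht.2)).1

theorem eigenvalues_le_inv_minPosEigenvalue_mul_sq (hA : A.IsHermitian) {i : n}
    (hi : 0 ≤ hA.eigenvalues i) :
    hA.eigenvalues i ≤ hA.minPosEigenvalue⁻¹ * hA.eigenvalues i ^ 2 := by
  rcases hi.eq_or_lt with h0 | hpos
  · simp [← h0]
  · rw [le_inv_mul_iff₀ (hA.minPosEigenvalue_pos hpos), sq]
    exact mul_le_mul_of_nonneg_right (hA.minPosEigenvalue_le hpos) hpos.le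

end IsHermitian

open scoped ComplexOrder in
theorem PosSemidef.inv_minPosEigenvalue_smul_mul_self_sub (hA : A.PosSemidef) :
    (hA.isHermitian.minPosEigenvalue⁻¹ • (A * A) - A).PosSemidef := by
  set hH := hA.isHermitian
  set c := hH.minPosEigenvalue
  set D := diagonal (RCLike.ofReal ∘ hH.eigenvalues : n → 𝕜)
  set D' := diagonal fun i => ((c⁻¹ * hH.eigenvalues i ^ 2 - hH.eigenvalues i : ℝ) : 𝕜)
  have hD : D' = c⁻¹ • (D * D) - D := by
    ext i j
    by_cases h : i = j <;> simp [D, D', h, sq, RCLike.real_smul_eq_coe_mul]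
  have hconj : c⁻¹ • (A * A) - A =
      Unitary.conjStarAlgAut 𝕜 (Matrix n n 𝕜) hH.eigenvectorUnitary D' := by
    conv_lhs => rw [hH.spectral_theorem]
    rw [hD, map_sub]
    simp only [RCLike.real_smul_eq_coe_smul (K := 𝕜), map_smul, map_mul]
    rfl
  rw [hconj, Unitary.conjStarAlgAut_apply, Unitary.isUnit_coe.posSemidef_star_right_conjugate_iff,
    posSemidef_diagonal_iff]
  exact fun i => RCLike.ofReal_nonneg.2 <|
    sub_nonneg.2 (hH.eigenvalues_le_inv_minPosEigenvalue_mul_sq (hA.eigenvalues_nonneg i))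

theorem exists_mulVec_eq_dotProduct_self_le {m : Type*} [Fintype m] (B : Matrix n m ℝ)
    (hB : (B * Bᵀ).IsHermitian) {w : n → ℝ} (hw : w ∈ LinearMap.range B.mulVecLin) :
    ∃ d, B *ᵥ d = w ∧ d ⬝ᵥ d ≤ hB.minPosEigenvalue⁻¹ * w ⬝ᵥ w := by
  rw [← range_mulVecLin_mul_transpose_self] at hw
  obtain ⟨u, rfl⟩ := hw
  set M := B * Bᵀ
  have hMt : Mᵀ = M := by simp [M]
  have hpsd : M.PosSemidef := by simpa using posSemidef_self_mul_conjTranspose B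
  have hquad := hpsd.inv_minPosEigenvalue_smul_mul_self_sub.dotProduct_mulVec_nonneg u
  rw [star_trivial, sub_mulVec, smul_mulVec, dotProduct_sub, dotProduct_smul, smul_eq_mul,
    sub_nonneg] at hquad
  refine ⟨Bᵀ *ᵥ u, mulVec_mulVec .., ?_⟩
  calc (Bᵀ *ᵥ u) ⬝ᵥ (Bᵀ *ᵥ u) = u ⬝ᵥ (M *ᵥ u) := by
        rw [dotProduct_mulVec, vecMul_transpose, mulVec_mulVec, dotProduct_comm]
    _ ≤ hB.minPosEigenvalue⁻¹ * (u ⬝ᵥ ((M * M) *ᵥ u)) := hquad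
    _ = hB.minPosEigenvalue⁻¹ * ((M *ᵥ u) ⬝ᵥ (M *ᵥ u)) := by
        rw [← mulVec_mulVec, dotProduct_mulVec, ← mulVec_transpose, hMt]

theorem exists_toEuclideanLin_eq_norm_le {m : Type*} [Fintype m] [DecidableEq m]
    (B : Matrix n m ℝ) (hB : (B * Bᵀ).IsHermitian) {w : EuclideanSpace ℝ n}
    (hw : w.ofLp ∈ LinearMap.range B.mulVecLin) :
    ∃ d : EuclideanSpace ℝ m, toEuclideanLin B d = w ∧ ‖d‖ ≤ ‖w‖ / √hB.minPosEigenvalue := by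
  obtain ⟨d, hd, hle⟩ := exists_mulVec_eq_dotProduct_self_le B hB hw
  have hsq : ‖WithLp.toLp 2 d‖ ^ 2 ≤ ‖w‖ ^ 2 / hB.minPosEigenvalue := by
    rw [EuclideanSpace.real_norm_sq_eq, EuclideanSpace.real_norm_sq_eq, div_eq_inv_mul]
    simpa [dotProduct, sq] using hle
  refine ⟨WithLp.toLp 2 d, by simp [hd], ?_⟩
  calc ‖WithLp.toLp 2 d‖ = √(‖WithLp.toLp 2 d‖ ^ 2) := (Real.sqrt_sq (norm_nonneg _)).symm
    _ ≤ √(‖w‖ ^ 2 / hB.minPosEigenvalue) := Real.sqrt_le_sqrt hsq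
    _ = ‖w‖ / √hB.minPosEigenvalue := by
        rw [Real.sqrt_div (sq_nonneg _), Real.sqrt_sq (norm_nonneg _)]

end Matrix

theorem LinearMap.map_add_add_mem {R E F : Type*} [Semiring R] [AddCommMonoid E]
    [AddCommGroup F] [Module R E] [Module R F] (T : E →ₗ[R] F) {C : Set F} {b b' : F} {d x : E}
    (hd : T d = b - b') (hx : T x + b ∈ C) : T (x + d) + b' ∈ C := by
  rwa [map_add, hd, add_assoc, sub_add_cancel]

theorem ConvexOn.fderiv_apply_le_fderiv_apply {E : Type*} [NormedAddCommGroup E] [NormedSpace ℝ E]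
    {f : E → ℝ} (hf : ConvexOn ℝ univ f) (hd : Differentiable ℝ f) (x y : E) :
    fderiv ℝ f x (y - x) ≤ fderiv ℝ f y (y - x) := by
  set ℓ : ℝ →ᵃ[ℝ] E := AffineMap.lineMap x y
  have hφ : ConvexOn ℝ univ (f ∘ ℓ) := by simpa using hf.comp_affineMap ℓ
  have hder (t : ℝ) : HasDerivAt (f ∘ ℓ) (fderiv ℝ f (ℓ t) (y - x)) t :=
    (hd _).hasFDerivAt.comp_hasDerivAt t AffineMap.hasDerivAt_lineMap
  have hmono := hφ.monotoneOn_deriv (fun t _ => (hder t).differentiableAt)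
    (mem_univ 0) (mem_univ 1) zero_le_one
  simpa [(hder _).deriv, ℓ] using hmono

section Gradient

variable {E : Type*} [NormedAddCommGroup E] [InnerProductSpace ℝ E] [CompleteSpace E] {f : E → ℝ}

theorem mul_norm_sub_sq_le_inner_gradient_sub {μ : ℝ}
    (hsc : ConvexOn ℝ univ fun x => f x - μ / 2 * ‖x‖ ^ 2) (hf : Differentiable ℝ f) (x y : E) :
    μ * ‖x - y‖ ^ 2 ≤ ⟪gradient f x - gradient f y, x - y⟫ := by
  have hg (z : E) : HasFDerivAt (fun x => f x - μ / 2 * ‖x‖ ^ 2)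
      (fderiv ℝ f z - (μ / 2) • 2 • innerSL ℝ z) z :=
    (hf z).hasFDerivAt.sub ((hasStrictFDerivAt_norm_sq z).hasFDerivAt.const_mul (μ / 2))
  have hmono := hsc.fderiv_apply_le_fderiv_apply (fun z => (hg z).differentiableAt) y x
  simp only [(hg _).fderiv, _root_.sub_apply, ← inner_gradient_left, _root_.smul_apply,
    coe_innerSL_apply, nsmul_eq_mul, Nat.cast_ofNat, smul_eq_mul] at hmono
  rw [← real_inner_self_eq_norm_sq, inner_sub_left, inner_sub_left]
  linarith

theorem IsMinOn.inner_gradient_sub_nonneg {U : Set E} {x y : E} (hf : DifferentiableAt ℝ f x)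
    (hU : Convex ℝ U) (hmin : IsMinOn f U x) (hx : x ∈ U) (hy : y ∈ U) :
    0 ≤ ⟪gradient f x, y - x⟫ := by
  rw [inner_gradient_left]
  exact hmin.localize.hasFDerivWithinAt_nonneg hf.hasFDerivAt.hasFDerivWithinAt
    (sub_mem_posTangentConeAt_of_segment_subset (hU.segment_subset hx hy))

theorem norm_sub_le_of_isMinOn_of_add_mem {μ : ℝ} {K : ℝ≥0} (hμ : 0 < μ)
    (hsc : ConvexOn ℝ univ fun x => f x - μ / 2 * ‖x‖ ^ 2) (hf : Differentiable ℝ f)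
    (hlip : LipschitzWith K (gradient f)) {U V : Set E} (hU : Convex ℝ U) (hV : Convex ℝ V)
    {d : E} (hUV : ∀ x ∈ U, x + d ∈ V) (hVU : ∀ y ∈ V, y - d ∈ U) {x y : E}
    (hx : x ∈ U) (hxmin : IsMinOn f U x) (hy : y ∈ V) (hymin : IsMinOn f V y) :
    ‖x - y‖ ≤ (1 + K / μ) * ‖d‖ := by
  have hx₁ := hxmin.inner_gradient_sub_nonneg (hf x) hU hx (hVU y hy)
  have hy₁ := hymin.inner_gradient_sub_nonneg (hf y) hV hy (hUV x hx)
  rw [show x + d - y = x - (y - d) by abel] at hy₁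
  have hmono := mul_norm_sub_sq_le_inner_gradient_sub hsc hf x (y - d)
  have hgrad : ‖gradient f y - gradient f (y - d)‖ ≤ K * ‖d‖ := by
    simpa using hlip.norm_sub_le y (y - d)
  have hcs := real_inner_le_norm (gradient f y - gradient f (y - d)) (x - (y - d))
  have hsplit : ⟪gradient f x - gradient f (y - d), x - (y - d)⟫ =
      -⟪gradient f x, y - d - x⟫ - ⟪gradient f y, x - (y - d)⟫ +
        ⟪gradient f y - gradient f (y - d), x - (y - d)⟫ := by
    simp only [inner_sub_left, inner_sub_right]; ring
  have hquad : μ * ‖x - (y - d)‖ ^ 2 ≤ K * ‖d‖ * ‖x - (y - d)‖ := by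
    nlinarith [norm_nonneg (x - (y - d))]
  have hclose : ‖x - (y - d)‖ ≤ K / μ * ‖d‖ := by
    rcases (norm_nonneg (x - (y - d))).eq_or_lt with h0 | hpos
    · rw [← h0]; positivity
    · rw [div_mul_eq_mul_div, le_div_iff₀ hμ]
      nlinarith
  calc ‖x - y‖ = ‖(x - (y - d)) - d‖ := by congr 1; abel
    _ ≤ ‖x - (y - d)‖ + ‖d‖ := norm_sub_le _ _
    _ ≤ (1 + K / μ) * ‖d‖ := by linarith

end Gradient

theorem stmt_5_general (n m : ℕ) (h : EuclideanSpace ℝ (Fin n) → ℝ)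
    (μ L : ℝ) (hμ : 0 < μ) (hL : 0 ≤ L)
    (hsc : ConvexOn ℝ Set.univ (fun x => h x - μ / 2 * ‖x‖ ^ 2))
    (hdiff : Differentiable ℝ h)
    (hlip : LipschitzWith (Real.toNNReal L) (fun x => gradient h x))
    (A : Matrix (Fin m) (Fin n) ℝ)
    (C : Set (EuclideanSpace ℝ (Fin m))) (hCconv : Convex ℝ C)
    (b₁ b₂ : EuclideanSpace ℝ (Fin m))
    (hb₁ : ∃ u, A.mulVec u = ofE b₁) (hb₂ : ∃ u, A.mulVec u = ofE b₂)
    (U₁ U₂ : Set (EuclideanSpace ℝ (Fin n)))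
    (hU₁ : U₁ = {x | toE (A.mulVec (ofE x)) + b₁ ∈ C})
    (hU₂ : U₂ = {x | toE (A.mulVec (ofE x)) + b₂ ∈ C})
    (xstar ystar : EuclideanSpace ℝ (Fin n))
    (hx : xstar ∈ U₁ ∧ ∀ x ∈ U₁, h xstar ≤ h x)
    (hy : ystar ∈ U₂ ∧ ∀ y ∈ U₂, h ystar ≤ h y)
    (hH : (A * Aᵀ).IsHermitian)
    (lamPlus : ℝ)
    (hlam : lamPlus = sInf {t : ℝ | 0 < t ∧ ∃ i, hH.eigenvalues i = t}) :
    ‖xstar - ystar‖ ≤ (1 + 2 * L / μ) / Real.sqrt lamPlus * ‖b₂ - b₁‖ := by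
  set T := toEuclideanLin A
  have hconv (b) : Convex ℝ {x | T x + b ∈ C} :=
    (hCconv.translate_preimage_left b).linear_preimage T
  obtain ⟨u₁, hu₁⟩ := hb₁
  obtain ⟨u₂, hu₂⟩ := hb₂
  obtain ⟨d, hd, hdnorm⟩ := exists_toEuclideanLin_eq_norm_le A hH (w := b₁ - b₂)
    ⟨u₁ - u₂, by simp [mulVec_sub, hu₁, hu₂, ofE]⟩
  have hUV : ∀ x ∈ U₁, x + d ∈ U₂ := by
    subst hU₁ hU₂
    exact fun x hx => T.map_add_add_mem hd hx
  have hVU : ∀ y ∈ U₂, y - d ∈ U₁ := by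
    subst hU₁ hU₂
    intro y hy
    rw [sub_eq_add_neg]
    exact T.map_add_add_mem (by rw [map_neg, hd, neg_sub]) hy
  have key := norm_sub_le_of_isMinOn_of_add_mem hμ hsc hdiff hlip (hU₁ ▸ hconv b₁)
    (hU₂ ▸ hconv b₂) hUV hVU hx.1 (isMinOn_iff.2 hx.2) hy.1 (isMinOn_iff.2 hy.2)
  rw [Real.coe_toNNReal L hL] at key
  subst hlam
  calc ‖xstar - ystar‖ ≤ (1 + L / μ) * ‖d‖ := key
    _ ≤ (1 + 2 * L / μ) * (‖b₂ - b₁‖ / √hH.minPosEigenvalue) := by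
        rw [norm_sub_rev b₂]
        gcongr
        linarith
    _ = (1 + 2 * L / μ) / √hH.minPosEigenvalue * ‖b₂ - b₁‖ := by ring

/-- Sensitivity of minimizers of a strongly convex smooth function over
shifted affine-preimage constraint sets:
`‖x* - y*‖ ≤ ((1 + 2L/μ)/√(λ_min⁺(AAᵀ))) ‖b₂ - b₁‖`. -/
theorem stmt_5 (n m : ℕ) (h : EuclideanSpace ℝ (Fin n) → ℝ)
    (μ L : ℝ) (hμ : 0 < μ) (hL : 0 ≤ L)
    (hsc : ConvexOn ℝ Set.univ (fun x => h x - μ / 2 * ‖x‖ ^ 2))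
    (hdiff : Differentiable ℝ h)
    (hlip : LipschitzWith (Real.toNNReal L) (fun x => gradient h x))
    (A : Matrix (Fin m) (Fin n) ℝ)
    (C : Set (EuclideanSpace ℝ (Fin m))) (hCclosed : IsClosed C) (hCconv : Convex ℝ C)
    (b₁ b₂ : EuclideanSpace ℝ (Fin m))
    (hb₁ : ∃ u, A.mulVec u = ofE b₁) (hb₂ : ∃ u, A.mulVec u = ofE b₂)
    (U₁ U₂ : Set (EuclideanSpace ℝ (Fin n)))
    (hU₁ : U₁ = {x | toE (A.mulVec (ofE x)) + b₁ ∈ C})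
    (hU₂ : U₂ = {x | toE (A.mulVec (ofE x)) + b₂ ∈ C})
    (hU₁ne : U₁.Nonempty) (hU₂ne : U₂.Nonempty)
    (xstar ystar : EuclideanSpace ℝ (Fin n))
    (hx : xstar ∈ U₁ ∧ ∀ x ∈ U₁, h xstar ≤ h x)
    (hy : ystar ∈ U₂ ∧ ∀ y ∈ U₂, h ystar ≤ h y)
    (hH : (A * Aᵀ).IsHermitian)
    (lamPlus : ℝ)
    (hlam : lamPlus = sInf {t : ℝ | 0 < t ∧ ∃ i, hH.eigenvalues i = t}) :
    ‖xstar - ystar‖ ≤ (1 + 2 * L / μ) / Real.sqrt lamPlus * ‖b₂ - b₁‖ :=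
  stmt_5_general n m h μ L hμ hL hsc hdiff hlip A C hCconv b₁ b₂ hb₁ hb₂ U₁ U₂ hU₁ hU₂ xstar ystar
    hx hy hH lamPlus hlam
end

section
/- Let (Lₖ) be a nonincreasing real sequence bounded below by L*, and suppose there exist constants a, b, c > 0 and α ∈ (1, 2) such that for all sufficiently large k, Lₖ₊₁ - Lₖ ≤ -c(Lₖ₊₁ - L*)^{2/α}. Then Lₖ - L* = O(k^{-α/(2-α)}); in particular, Lₖ - L* ∈ o(1/k). -/
/-!
Write `u k = L k - L*` and `s = 2 / α - 1 ∈ (0, 1)`, so the hypothesis reads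
`c u (k+1) ^ (1 + s) ≤ u k - u (k+1)`. It forces `u k ^ (-s)` to increase by a fixed `δ > 0`
at every step: if `u (k+1) ≤ u k / 2` the increase is at least `(2 ^ s - 1) u k ^ (-s)`, and
otherwise the tangent-line inequality for the convex function `x ↦ x ^ (-s)` gives at least
`s c 2 ^ (-(1 + s))`. Hence `u k ^ (-s) ≳ k`, i.e. `u k ≲ k ^ (-1/s) = k ^ (-α/(2-α))`, which is
`o(1/k)` because `α / (2 - α) > 1`.
-/

open Filter Real

lemma one_add_mul_one_sub_le_rpow_neg {s t : ℝ} (hs0 : 0 ≤ s) (hs1 : s ≤ 1) (ht0 : 0 < t)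
    (ht1 : t ≤ 1) : 1 + s * (1 - t) ≤ t ^ (-s) := by
  have bernoulli : t ^ s ≤ 1 + s * (t - 1) := by
    simpa using rpow_one_add_le_one_add_mul_self (s := t - 1) (by linarith) hs0 hs1
  have hts : 0 < t ^ s := rpow_pos_of_pos ht0 s
  rw [rpow_neg ht0.le, ← one_div, le_div_iff₀ hts]
  calc (1 + s * (1 - t)) * t ^ s ≤ (1 + s * (1 - t)) * (1 + s * (t - 1)) := by
        gcongr
    _ ≤ 1 := by nlinarith [sq_nonneg (s * (1 - t))]

lemma rpow_neg_add_mul_sub_le {s a b : ℝ} (hs0 : 0 ≤ s) (hs1 : s ≤ 1) (hb : 0 < b)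
    (hba : b ≤ a) : a ^ (-s) + s * (a - b) * a ^ (-(s + 1)) ≤ b ^ (-s) := by
  have ha : 0 < a := hb.trans_le hba
  have h := one_add_mul_one_sub_le_rpow_neg hs0 hs1 (div_pos hb ha) ((div_le_one ha).mpr hba)
  calc a ^ (-s) + s * (a - b) * a ^ (-(s + 1))
      = a ^ (-s) * (1 + s * (1 - b / a)) := by
        rw [neg_add, rpow_add ha, rpow_neg_one]; field_simp
    _ ≤ a ^ (-s) * (b / a) ^ (-s) := by gcongr
    _ = b ^ (-s) := by rw [div_rpow hb.le ha.le]; field_simp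

lemma rpow_neg_add_le_of_mul_rpow_le_sub {s c a b A : ℝ} (hs0 : 0 ≤ s) (hs1 : s ≤ 1)
    (hb : 0 < b) (hba : b ≤ a) (haA : a ≤ A)
    (hdec : c * b ^ (s + 1) ≤ a - b) :
    a ^ (-s) + min ((2 ^ s - 1) * A ^ (-s)) (s * c * 2 ^ (-(s + 1))) ≤ b ^ (-s) := by
  have ha : 0 < a := hb.trans_le hba
  rcases le_or_gt (2 * b) a with hhalf | hhalf
  · have h2s : 1 ≤ (2 : ℝ) ^ s := one_le_rpow (by norm_num) hs0
    have hA : A ^ (-s) ≤ a ^ (-s) := rpow_le_rpow_of_nonpos ha haA (by linarith)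
    calc a ^ (-s) + min ((2 ^ s - 1) * A ^ (-s)) (s * c * 2 ^ (-(s + 1)))
        ≤ a ^ (-s) + (2 ^ s - 1) * a ^ (-s) := by
          gcongr
          exact (min_le_left _ _).trans (mul_le_mul_of_nonneg_left hA (by linarith))
      _ = (a / 2) ^ (-s) := by
          rw [div_rpow ha.le (by norm_num), rpow_neg (by norm_num : (0 : ℝ) ≤ 2),
            div_inv_eq_mul]
          ring
      _ ≤ b ^ (-s) := rpow_le_rpow_of_nonpos hb (by linarith) (by linarith)
  · have hcomp : (2 * b) ^ (-(s + 1)) ≤ a ^ (-(s + 1)) :=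
      rpow_le_rpow_of_nonpos ha hhalf.le (by linarith)
    have hbb : b ^ (s + 1) * b ^ (-(s + 1)) = 1 := by rw [← rpow_add hb]; simp
    calc a ^ (-s) + min ((2 ^ s - 1) * A ^ (-s)) (s * c * 2 ^ (-(s + 1)))
        ≤ a ^ (-s) + s * (c * b ^ (s + 1)) * (2 * b) ^ (-(s + 1)) := by
          have hconst : s * (c * b ^ (s + 1)) * (2 ^ (-(s + 1)) * b ^ (-(s + 1)))
              = s * c * 2 ^ (-(s + 1)) := by linear_combination s * c * 2 ^ (-(s + 1)) * hbb
          rw [mul_rpow (by norm_num) hb.le, hconst]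
          gcongr
          exact min_le_right _ _
      _ ≤ a ^ (-s) + s * (a - b) * a ^ (-(s + 1)) := by gcongr
      _ ≤ b ^ (-s) := rpow_neg_add_mul_sub_le hs0 hs1 hb hba

lemma add_mul_le_of_add_le_succ {v : ℕ → ℝ} {δ : ℝ} {K : ℕ}
    (h : ∀ k ≥ K, v k + δ ≤ v (k + 1)) (n : ℕ) : v K + n * δ ≤ v (K + n) := by
  induction n with
  | zero => simp
  | succ n ih =>
    rw [← add_assoc]
    push_cast
    linarith [h (K + n) (Nat.le_add_right K n)]

lemma le_mul_rpow_of_mul_le_rpow_neg {s a t x : ℝ} (hs : 0 < s) (hx : 0 < x) (ha : 0 < a)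
    (ht : 0 < t) (h : a * t ≤ x ^ (-s)) : x ≤ a ^ (-s⁻¹) * t ^ (-s⁻¹) := by
  calc x = (x ^ (-s)) ^ (-s⁻¹) := by
        rw [← rpow_mul hx.le, neg_mul_neg, mul_inv_cancel₀ hs.ne', rpow_one]
    _ ≤ (a * t) ^ (-s⁻¹) := rpow_le_rpow_of_nonpos (by positivity) h (by simp [hs.le])
    _ = a ^ (-s⁻¹) * t ^ (-s⁻¹) := mul_rpow ha.le ht.le

lemma exists_eventually_le_mul_rpow_of_pos {u : ℕ → ℝ} {s c : ℝ} {K : ℕ} (hs0 : 0 < s)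
    (hs1 : s ≤ 1) (hc : 0 < c) (hu : Antitone u) (hpos : ∀ k, 0 < u k)
    (hdec : ∀ k ≥ K, c * u (k + 1) ^ (s + 1) ≤ u k - u (k + 1)) :
    ∃ C, ∀ᶠ k : ℕ in atTop, u k ≤ C * (k : ℝ) ^ (-s⁻¹) := by
  set δ := min ((2 ^ s - 1) * u K ^ (-s)) (s * c * 2 ^ (-(s + 1)))
  have hδ : 0 < δ := by
    have h2s : 1 < (2 : ℝ) ^ s := one_lt_rpow (by norm_num) hs0
    have huK : 0 < u K ^ (-s) := rpow_pos_of_pos (hpos K) _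
    exact lt_min (mul_pos (by linarith) huK) (by positivity)
  have hgrowth : ∀ n : ℕ, u K ^ (-s) + n * δ ≤ u (K + n) ^ (-s) :=
    add_mul_le_of_add_le_succ fun k hk =>
      rpow_neg_add_le_of_mul_rpow_le_sub hs0.le hs1 (hpos _) (hu k.le_succ) (hu hk) (hdec k hk)
  refine ⟨(δ / 2) ^ (-s⁻¹), eventually_atTop.2 ⟨2 * K + 1, fun k hk => ?_⟩⟩
  obtain ⟨n, rfl⟩ : ∃ n, k = K + n := ⟨k - K, by omega⟩
  have hn : ((K + n : ℕ) : ℝ) ≤ 2 * n := by exact_mod_cast (by omega : K + n ≤ 2 * n)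
  refine le_mul_rpow_of_mul_le_rpow_neg hs0 (hpos _) (by positivity)
    (by exact_mod_cast (by omega : 0 < K + n)) ?_
  nlinarith [hgrowth n, rpow_pos_of_pos (hpos K) (-s)]

lemma exists_eventually_le_mul_rpow {u : ℕ → ℝ} {s c : ℝ} {K : ℕ} (hs0 : 0 < s) (hs1 : s ≤ 1)
    (hc : 0 < c) (hu : Antitone u)
    (hdec : ∀ k ≥ K, c * u (k + 1) ^ (s + 1) ≤ u k - u (k + 1)) :
    ∃ C, ∀ᶠ k : ℕ in atTop, u k ≤ C * (k : ℝ) ^ (-s⁻¹) := by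
  by_cases hpos : ∀ k, 0 < u k
  · exact exists_eventually_le_mul_rpow_of_pos hs0 hs1 hc hu hpos hdec
  · push Not at hpos
    obtain ⟨k₀, hk₀⟩ := hpos
    exact ⟨0, eventually_atTop.2 ⟨k₀, fun k hk => by simpa using (hu hk).trans hk₀⟩⟩

lemma exists_pos_forall_le_mul_rpow {u : ℕ → ℝ} {β C : ℝ}
    (h : ∀ᶠ k : ℕ in atTop, u k ≤ C * (k : ℝ) ^ (-β)) :
    ∃ M, 0 < M ∧ ∀ k : ℕ, 1 ≤ k → u k ≤ M * (k : ℝ) ^ (-β) := by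
  obtain ⟨N, hN⟩ := eventually_atTop.1 h
  set S := ∑ k ∈ Finset.range N, |u k| * (k : ℝ) ^ β
  have hS : 0 ≤ S := Finset.sum_nonneg fun k _ => by positivity
  have hCM := le_max_left C 1
  have hOneM := le_max_right C 1
  refine ⟨max C 1 + S, by linarith, fun k hk => ?_⟩
  have hk0 : (0 : ℝ) < k := by exact_mod_cast hk
  rcases le_or_gt N k with hkN | hkN
  · calc u k ≤ C * (k : ℝ) ^ (-β) := hN k hkN
      _ ≤ (max C 1 + S) * (k : ℝ) ^ (-β) := by gcongr; linarith
  · have hkS : |u k| * (k : ℝ) ^ β ≤ S :=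
      Finset.single_le_sum (f := fun i : ℕ => |u i| * (i : ℝ) ^ β) (fun i _ => by positivity)
        (Finset.mem_range.2 hkN)
    calc u k ≤ |u k| * (k : ℝ) ^ β * (k : ℝ) ^ (-β) := by
          rw [mul_assoc, ← rpow_add hk0, add_neg_cancel, rpow_zero, mul_one]
          exact le_abs_self _
      _ ≤ (max C 1 + S) * (k : ℝ) ^ (-β) := by gcongr; linarith

lemma tendsto_natCast_mul_of_le_mul_rpow {u : ℕ → ℝ} {β C : ℝ} (hβ : 1 < β)
    (hu0 : ∀ k, 0 ≤ u k) (h : ∀ᶠ k : ℕ in atTop, u k ≤ C * (k : ℝ) ^ (-β)) :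
    Tendsto (fun k : ℕ => (k : ℝ) * u k) atTop (nhds 0) := by
  have hlim : Tendsto (fun k : ℕ => C * (k : ℝ) ^ (-(β - 1))) atTop (nhds 0) := by
    have := ((tendsto_rpow_neg_atTop (by linarith : 0 < β - 1)).comp
      tendsto_natCast_atTop_atTop).const_mul C
    rwa [mul_zero] at this
  refine squeeze_zero' (Eventually.of_forall fun k => mul_nonneg k.cast_nonneg (hu0 k)) ?_ hlim
  filter_upwards [h, eventually_ge_atTop 1] with k hk hk1
  have hk0 : (0 : ℝ) < k := by exact_mod_cast hk1
  calc (k : ℝ) * u k ≤ k * (C * (k : ℝ) ^ (-β)) := by gcongr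
    _ = C * (k : ℝ) ^ (-(β - 1)) := by
      rw [show -(β - 1) = 1 + -β by ring, rpow_add hk0, rpow_one]; ring

/-- If `(Lₖ)` is nonincreasing, bounded below by `L*`, and for all
sufficiently large `k`, `Lₖ₊₁ - Lₖ ≤ -c (Lₖ₊₁ - L*)^{2/α}` with `c > 0`, `α ∈ (1,2)`,
then `Lₖ - L* = O(k^{-α/(2-α)})`; in particular `Lₖ - L* ∈ o(1/k)`. -/
theorem stmt_18 (L : ℕ → ℝ) (Lstar : ℝ) (hmono : Antitone L)
    (hbound : ∀ k, Lstar ≤ L k)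
    (α c : ℝ) (hα : 1 < α ∧ α < 2) (hc : 0 < c)
    (hdec : ∃ K : ℕ, ∀ k ≥ K,
      L (k + 1) - L k ≤ -c * (L (k + 1) - Lstar) ^ (2 / α)) :
    (∃ M : ℝ, 0 < M ∧ ∀ k : ℕ, 1 ≤ k →
        L k - Lstar ≤ M * (k : ℝ) ^ (-(α / (2 - α)))) ∧
      Tendsto (fun k : ℕ => (k : ℝ) * (L k - Lstar)) atTop (nhds 0) := by
  obtain ⟨hα1, hα2⟩ := hα
  obtain ⟨K, hK⟩ := hdec
  have hs0 : 0 < 2 / α - 1 := by rw [sub_pos, one_lt_div (by linarith)]; exact hα2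
  have hs1 : 2 / α - 1 < 1 := by rw [sub_lt_iff_lt_add, div_lt_iff₀ (by linarith)]; linarith
  have hβ : (2 / α - 1)⁻¹ = α / (2 - α) := by
    rw [div_sub_one (by linarith), inv_div]
  have hu0 : ∀ k, 0 ≤ L k - Lstar := fun k => sub_nonneg.2 (hbound k)
  obtain ⟨C, hC⟩ := exists_eventually_le_mul_rpow (u := fun k => L k - Lstar) hs0 hs1.le hc
    (fun i j hij => sub_le_sub_right (hmono hij) _)
    (fun k hk => by simp only [sub_add_cancel]; linarith [hK k hk])
  have hβ1 : 1 < α / (2 - α) := hβ ▸ one_lt_inv₀ hs0 |>.2 hs1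
  rw [hβ] at hC
  exact ⟨exists_pos_forall_le_mul_rpow hC, tendsto_natCast_mul_of_le_mul_rpow hβ1 hu0 hC⟩
end
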